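/- arXiv:1502.02313 — 2 statements merged into one kernel-verified Lean document; each statement's English description precedes it below -/
import Mathlib

section
/- Let b : [0,T) → End(V) be a differentiable family of endomorphisms of an m-dimensional real inner product space satisfying the Riccati equation b' = -R - b², where R(t) is self-adjoint for each t. If b(0) is self-adjoint then b(t) is self-adjoint for all t. Moreover the trace θ = tr b satisfies θ' = -tr R - tr(σ²) - θ²/m, where σ is the trace-free part of b. -/
open Set ContinuousLinearMap

theorem norm_mul_add_mul_star_le {A : Type*} [NormedRing A] [StarRing A] [NormedStarGroup A]
    (x y : A) : ‖x * y + y * star x‖ ≤ 2 * ‖x‖ * ‖y‖ :=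
  calc ‖x * y + y * star x‖ ≤ ‖x‖ * ‖y‖ + ‖y‖ * ‖star x‖ :=
        (norm_add_le _ _).trans (add_le_add (norm_mul_le _ _) (norm_mul_le _ _))
    _ = 2 * ‖x‖ * ‖y‖ := by rw [norm_star]; ring

section Riccati

variable {V : Type*} [NormedAddCommGroup V] [InnerProductSpace ℝ V] [CompleteSpace V]

theorem hasDerivAt_sub_star_of_riccati {R b : ℝ → V →L[ℝ] V} {t : ℝ}
    (hR : IsSelfAdjoint (R t)) (hb : HasDerivAt b (-(R t) - (b t).comp (b t)) t) :
    HasDerivAt (fun s => b s - star (b s))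
      (-(b t * (b t - star (b t)) + (b t - star (b t)) * star (b t))) t := by
  refine (hb.sub hb.star).congr_deriv ?_
  rw [← mul_def, star_sub, star_neg, star_mul, hR.star_eq]
  noncomm_ring

/-- The skew part `b - b†` solves a linear equation with bounded coefficients and vanishes at
`a`, so it vanishes identically by Grönwall. -/
theorem IsSelfAdjoint.of_riccati {R b : ℝ → V →L[ℝ] V} {a T : ℝ}
    (hR : ∀ t ∈ Ico a T, IsSelfAdjoint (R t))
    (hb : ∀ t ∈ Ico a T, HasDerivAt b (-(R t) - (b t).comp (b t)) t)
    (ha : IsSelfAdjoint (b a)) :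
    ∀ t ∈ Ico a T, IsSelfAdjoint (b t) := by
  intro t ht
  have hsub : Icc a t ⊆ Ico a T := fun s hs => ⟨hs.1, hs.2.trans_lt ht.2⟩
  obtain ⟨C, hC⟩ := isCompact_Icc.exists_bound_of_continuousOn
    fun s hs => (hb s (hsub hs)).continuousAt.continuousWithinAt
  have hskew (s : ℝ) (hs : s ∈ Icc a t) :=
    hasDerivAt_sub_star_of_riccati (hR s (hsub hs)) (hb s (hsub hs))
  have hbound : ∀ s ∈ Ico a t,
      ‖-(b s * (b s - star (b s)) + (b s - star (b s)) * star (b s))‖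
        ≤ 2 * C * ‖b s - star (b s)‖ := fun s hs => by
    rw [norm_neg]
    refine (norm_mul_add_mul_star_le _ _).trans ?_
    gcongr
    exact hC s (Ico_subset_Icc_self hs)
  have hzero := eq_zero_of_abs_deriv_le_mul_abs_self_of_eq_zero_right
    (fun s hs => (hskew s hs).continuousAt.continuousWithinAt)
    (fun s hs => (hskew s (Ico_subset_Icc_self hs)).hasDerivWithinAt)
    (by rw [ha.star_eq, sub_self]) hbound t (right_mem_Icc.mpr ht.1)
  exact (sub_eq_zero.mp hzero).symm

end Riccati

theorem HasDerivAt.trace {𝕜 E : Type*} [NontriviallyNormedField 𝕜] [CompleteSpace 𝕜]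
    [NormedAddCommGroup E] [NormedSpace 𝕜 E] [FiniteDimensional 𝕜 E]
    {f : 𝕜 → E →L[𝕜] E} {f' : E →L[𝕜] E} {t : 𝕜} (hf : HasDerivAt f f' t) :
    HasDerivAt (fun s => LinearMap.trace 𝕜 E (f s : E →ₗ[𝕜] E))
      (LinearMap.trace 𝕜 E (f' : E →ₗ[𝕜] E)) t :=
  (LinearMap.toContinuousLinearMap
    ((LinearMap.trace 𝕜 E).comp (coeLM 𝕜))).hasFDerivAt.comp_hasDerivAt t hf

theorem LinearMap.trace_sq_sub_trace_div_smul_id {K M : Type*} [Field K] [AddCommGroup M]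
    [Module K M] [FiniteDimensional K M] {m : ℕ} (hm : Module.finrank K M = m)
    (hm0 : (m : K) ≠ 0) (B : M →ₗ[K] M) :
    trace K M ((B - (trace K M B / m) • id) ∘ₗ (B - (trace K M B / m) • id))
      = trace K M (B ∘ₗ B) - trace K M B ^ 2 / m := by
  simp only [sub_comp, comp_sub, smul_comp, comp_smul, id_comp, comp_id, map_sub, map_smul,
    trace_id, hm, smul_eq_mul]
  field_simp
  ring

theorem stmt_6_general {V : Type*} [NormedAddCommGroup V] [InnerProductSpace ℝ V]
    [FiniteDimensional ℝ V] (m : ℕ) (hm : Module.finrank ℝ V = m) (hm0 : 0 < m)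
    (T : ℝ) (R b : ℝ → V →L[ℝ] V)
    (hRsa : ∀ t ∈ Set.Ico (0 : ℝ) T, ∀ x y : V,
      (inner ℝ (R t x) y : ℝ) = inner ℝ x (R t y))
    (hode : ∀ t ∈ Set.Ico (0 : ℝ) T,
      HasDerivAt b (-(R t) - (b t).comp (b t)) t)
    (hb0 : ∀ x y : V, (inner ℝ (b 0 x) y : ℝ) = inner ℝ x (b 0 y)) :
    (∀ t ∈ Set.Ico (0 : ℝ) T, ∀ x y : V,
      (inner ℝ (b t x) y : ℝ) = inner ℝ x (b t y)) ∧
    ∀ t ∈ Set.Ico (0 : ℝ) T,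
      HasDerivAt (fun s => LinearMap.trace ℝ V (b s : V →ₗ[ℝ] V))
        (-(LinearMap.trace ℝ V (R t : V →ₗ[ℝ] V))
          - LinearMap.trace ℝ V
              (((b t : V →ₗ[ℝ] V)
                  - (LinearMap.trace ℝ V (b t : V →ₗ[ℝ] V) / (m : ℝ)) • LinearMap.id) ∘ₗ
               ((b t : V →ₗ[ℝ] V)
                  - (LinearMap.trace ℝ V (b t : V →ₗ[ℝ] V) / (m : ℝ)) • LinearMap.id))
          - (LinearMap.trace ℝ V (b t : V →ₗ[ℝ] V)) ^ 2 / (m : ℝ)) t := by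
  refine ⟨fun t ht => isSelfAdjoint_iff_isSymmetric.mp ?_, fun t ht => ?_⟩
  · exact IsSelfAdjoint.of_riccati (fun s hs => isSelfAdjoint_iff_isSymmetric.mpr (hRsa s hs))
      hode (isSelfAdjoint_iff_isSymmetric.mpr hb0) t ht
  · rw [LinearMap.trace_sq_sub_trace_div_smul_id hm (by exact_mod_cast hm0.ne')]
    refine (hode t ht).trace.congr_deriv ?_
    simp only [toLinearMap_sub, toLinearMap_neg, toLinearMap_comp, map_sub, map_neg]
    ring

/-- For the Riccati equation b' = -R - b² with R(t) self-adjoint and b(0)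
self-adjoint, b(t) stays self-adjoint, and the trace θ = tr b satisfies the
Raychaudhuri equation θ' = -tr R - tr(σ²) - θ²/m where σ is the trace-free part of b. -/
theorem stmt_6 {V : Type*} [NormedAddCommGroup V] [InnerProductSpace ℝ V]
    [FiniteDimensional ℝ V] (m : ℕ) (hm : Module.finrank ℝ V = m) (hm0 : 0 < m)
    (T : ℝ) (R b : ℝ → V →L[ℝ] V) (hRcont : Continuous R)
    (hRsa : ∀ t ∈ Set.Ico (0 : ℝ) T, ∀ x y : V,
      (inner ℝ (R t x) y : ℝ) = inner ℝ x (R t y))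
    (hode : ∀ t ∈ Set.Ico (0 : ℝ) T,
      HasDerivAt b (-(R t) - (b t).comp (b t)) t)
    (hb0 : ∀ x y : V, (inner ℝ (b 0 x) y : ℝ) = inner ℝ x (b 0 y)) :
    (∀ t ∈ Set.Ico (0 : ℝ) T, ∀ x y : V,
      (inner ℝ (b t x) y : ℝ) = inner ℝ x (b t y)) ∧
    ∀ t ∈ Set.Ico (0 : ℝ) T,
      HasDerivAt (fun s => LinearMap.trace ℝ V (b s : V →ₗ[ℝ] V))
        (-(LinearMap.trace ℝ V (R t : V →ₗ[ℝ] V))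
          - LinearMap.trace ℝ V
              (((b t : V →ₗ[ℝ] V)
                  - (LinearMap.trace ℝ V (b t : V →ₗ[ℝ] V) / (m : ℝ)) • LinearMap.id) ∘ₗ
               ((b t : V →ₗ[ℝ] V)
                  - (LinearMap.trace ℝ V (b t : V →ₗ[ℝ] V) / (m : ℝ)) • LinearMap.id))
          - (LinearMap.trace ℝ V (b t : V →ₗ[ℝ] V)) ^ 2 / (m : ℝ)) t :=
  stmt_6_general m hm hm0 T R b hRsa hode hb0
end

section
/- Suppose f : [a, ∞) → ℝ is C¹ and σ : [a,∞) → ℝ with σ ≥ 0, f' ≤ -σ - f²/k for a constant k > 0 (Raychaudhuri inequality with nonnegative Ricci and shear terms). If f(t₀) < 0 for some t₀ ≥ a, then f is not defined/finite on all of [a, ∞): there exists t₁ ≤ t₀ + k/(-f(t₀)) at which no C¹ extension of f satisfying the inequality can exist. -/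
/-!
Since `σ ≥ 0`, `f` satisfies the Riccati inequality `f' ≤ -f²/k`. In particular `f` is
nonincreasing, so it stays negative after `t₀`, and there `(1/f)' = -f'/f² ≥ 1/k`. Hence
`1/f(t) ≥ 1/f(t₀) + (t - t₀)/k`, and since the left side is negative, `t - t₀ < k/(-f(t₀))`.
-/

open Set

section Riccati

variable {f : ℝ → ℝ} {k t₀ t₁ : ℝ}

theorem monotoneOn_inv_sub_div_of_deriv_le_neg_sq_div
    (hdiff : DifferentiableOn ℝ f (Icc t₀ t₁)) (hne : ∀ x ∈ Icc t₀ t₁, f x ≠ 0)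
    (hderiv : ∀ x ∈ Ioo t₀ t₁, deriv f x ≤ -f x ^ 2 / k) :
    MonotoneOn (fun t => (f t)⁻¹ - t / k) (Icc t₀ t₁) := by
  have hg : ∀ x ∈ Ioo t₀ t₁,
      HasDerivAt (fun t => (f t)⁻¹ - t / k) (-deriv f x / f x ^ 2 - 1 / k) x := by
    intro x hx
    have hfx : HasDerivAt f (deriv f x) x :=
      (hdiff.differentiableAt (Icc_mem_nhds hx.1 hx.2)).hasDerivAt
    exact (hfx.inv (hne x (Ioo_subset_Icc_self hx))).sub ((hasDerivAt_id x).div_const k)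
  refine monotoneOn_of_deriv_nonneg (convex_Icc _ _)
    ((hdiff.continuousOn.inv₀ hne).sub (continuousOn_id.div_const k)) ?_ ?_
  · rw [interior_Icc]
    exact fun x hx => (hg x hx).differentiableAt.differentiableWithinAt
  · rw [interior_Icc]
    intro x hx
    have hsq : 0 < f x ^ 2 := sq_pos_of_ne_zero (hne x (Ioo_subset_Icc_self hx))
    rw [(hg x hx).deriv, sub_nonneg, le_div_iff₀ hsq]
    rw [one_div_mul_eq_div]
    linarith [hderiv x hx, neg_div k (f x ^ 2)]

theorem lt_add_div_neg_of_deriv_le_neg_sq_div (hk : 0 < k)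
    (hdiff : DifferentiableOn ℝ f (Icc t₀ t₁))
    (hderiv : ∀ x ∈ Ioo t₀ t₁, deriv f x ≤ -f x ^ 2 / k) (hf : f t₀ < 0) (h : t₀ ≤ t₁) :
    t₁ < t₀ + k / -f t₀ := by
  have hanti : AntitoneOn f (Icc t₀ t₁) := by
    refine antitoneOn_of_deriv_nonpos (convex_Icc _ _) hdiff.continuousOn
      (hdiff.mono interior_subset) ?_
    rw [interior_Icc]
    intro x hx
    linarith [hderiv x hx, div_nonneg (sq_nonneg (f x)) hk.le, neg_div k (f x ^ 2)]
  have hneg : ∀ x ∈ Icc t₀ t₁, f x < 0 := fun x hx =>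
    (hanti (left_mem_Icc.2 h) hx hx.1).trans_lt hf
  have hmono := monotoneOn_inv_sub_div_of_deriv_le_neg_sq_div hdiff
    (fun x hx => (hneg x hx).ne) hderiv (left_mem_Icc.2 h) (right_mem_Icc.2 h) h
  have hinv : (f t₁)⁻¹ < 0 := inv_lt_zero.2 (hneg t₁ (right_mem_Icc.2 h))
  have hbound : (t₁ - t₀) / k < (-f t₀)⁻¹ := by
    rw [sub_div, inv_neg]
    linarith
  rw [div_lt_iff₀ hk] at hbound
  rw [div_eq_mul_inv]
  linarith

end Riccati

/-- Raychaudhuri inequality f' ≤ -σ - f²/k with σ ≥ 0 and f(t₀) < 0 implies the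
maximal domain [a,T) is bounded: T ≤ t₀ + k/(-f(t₀)). -/
theorem stmt_14 (k a T t₀ : ℝ) (hk : 0 < k) (f σ : ℝ → ℝ)
    (hσ : ∀ t ∈ Set.Ico a T, 0 ≤ σ t)
    (hdiff : ∀ t ∈ Set.Ico a T, DifferentiableAt ℝ f t)
    (hineq : ∀ t ∈ Set.Ico a T, deriv f t ≤ -σ t - (f t) ^ 2 / k)
    (ht₀ : t₀ ∈ Set.Ico a T) (hf : f t₀ < 0) :
    T ≤ t₀ + k / (-f t₀) := by
  by_contra! hT
  set t₁ := t₀ + k / -f t₀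
  have hsub : Icc t₀ t₁ ⊆ Ico a T := fun x hx => ⟨ht₀.1.trans hx.1, hx.2.trans_lt hT⟩
  have ht₀t₁ : t₀ ≤ t₁ := le_add_of_nonneg_right (div_pos hk (neg_pos.2 hf)).le
  have hriccati : ∀ x ∈ Ioo t₀ t₁, deriv f x ≤ -f x ^ 2 / k := by
    intro x hx
    have hx' := hsub (Ioo_subset_Icc_self hx)
    linarith [hineq x hx', hσ x hx', neg_div k (f x ^ 2)]
  exact lt_irrefl t₁ (lt_add_div_neg_of_deriv_le_neg_sq_div hk
    (fun x hx => (hdiff x (hsub hx)).differentiableWithinAt) hriccati hf ht₀t₁)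
end
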